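/- For every n ≥ 0 and every P ∈ D_n^{h,≥}, the number of occurrences of the factor UUU in P equals m_{UF^+D}(φ(P)) + 2·(m_{UF^+U}(φ(P)) + m_{UU}(φ(P))), where m_{UF^+D} counts factors UF^kD (k ≥ 1), m_{UF^+U} counts factors UF^kU (k ≥ 1), and m_{UU} counts factors UU. -/

import Mathlib

inductive Step : Type
  | U | D | F
  deriving DecidableEq, Repr

open Step

/-- Number of occurrences of `p` as a factor (consecutive steps) of `w`. -/
def countFactor (p w : List Step) : ℕ :=
  w.tails.countP fun t => p.isPrefixOf t

/-- `w` is a Dyck path (word over {U,D} with as many U's as D's,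
every prefix having at least as many U's as D's). -/
def IsDyck (w : List Step) : Prop :=
  w.count F = 0 ∧ w.count U = w.count D ∧
    ∀ p : List Step, p <+: w → p.count D ≤ p.count U

/-- `w` is a Motzkin path. -/
def IsMotzkin (w : List Step) : Prop :=
  w.count U = w.count D ∧ ∀ p : List Step, p <+: w → p.count D ≤ p.count U

/-- The (maximal) height of a path. -/
def height (w : List Step) : ℕ :=
  (w.inits.map fun p => p.count U - p.count D).foldr max 0

/-- The set `D^{h,≥}` of Dyck paths with first return decomposition
`P = U α D β` satisfying `h(UαD) ≥ h(β)`, recursively. -/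
inductive DH : List Step → Prop
  | nil : DH []
  | cons (α β : List Step) : DH α → DH β →
      height (U :: (α ++ [D])) ≥ height β → DH (U :: (α ++ [D] ++ β))

/-- The map φ from `D^{h,≥}` to Motzkin paths, as a relation:
φ(ε)=ε, φ(αUD)=φ(α)F, φ(αUUβDγD)=φ(α)φ(γ)Uφ(β)D. -/
inductive Phi : List Step → List Step → Prop
  | nil : Phi [] []
  | flat (α a : List Step) : DH α → Phi α a →
      Phi (α ++ [U, D]) (a ++ [F])
  | up (α β γ a b c : List Step) : DH α → DH β → DH γ →
      Phi α a → Phi β b → Phi γ c →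
      Phi (α ++ [U, U] ++ β ++ [D] ++ γ ++ [D]) (a ++ c ++ U :: (b ++ [D]))

/-- Auxiliary: the list starts with one or more `F`'s followed by a `D`. -/
def fThenD : List Step → Bool
  | F :: D :: _ => true
  | F :: rest => fThenD rest
  | _ => false

/-- Auxiliary: the list starts with one or more `F`'s followed by a `U`. -/
def fThenU : List Step → Bool
  | F :: U :: _ => true
  | F :: rest => fThenU rest
  | _ => false

/-- Number of occurrences of factors of the form `U F^k D` with `k ≥ 1` in `w`. -/
def countUFD (w : List Step) : ℕ :=
  w.tails.countP fun t => match t with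
    | U :: rest => fThenD rest
    | _ => false

/-- Number of occurrences of factors of the form `U F^k U` with `k ≥ 1` in `w`. -/
def countUFU (w : List Step) : ℕ :=
  w.tails.countP fun t => match t with
    | U :: rest => fThenU rest
    | _ => false

/-!
Each of the four patterns begins with `U` and can straddle the junction of `x ++ y` only if `x` ends
with a factor `U F^k`. Paths in `D^{h,≥}` end with `D` and their images under `φ` end with `F` or
`D`, so all counts are additive along the recursion for `φ`, and only the new factor
`UUβD ↦ Uφ(β)D` contributes. At its start `UUU` occurs 0, 1 or 2 times according as `β` is empty,
starts with `UD`, or starts with `UU`. Correspondingly `φ(β)` is empty, a nonempty run of `F`s (the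
condition `h(UαD) ≥ h(β)` forces `β = (UD)^k`), or of the form `F^k U…`, so `Uφ(β)D` starts with
`UD`, `UF^kD`, or `UF^kU` resp. `UU`, of weights 0, 1 and 2.
-/

theorem List.countP_tails_append {α : Type*} (q : List α → Bool) (hq : q [] = false)
    (x y : List α) (h : ∀ t, t <:+ x → t ≠ [] → q (t ++ y) = q t) :
    (x ++ y).tails.countP q = x.tails.countP q + y.tails.countP q := by
  induction x with
  | nil => simp [hq]
  | cons a x ih =>
    have hax := h (a :: x) (List.suffix_refl _) (List.cons_ne_nil a x)
    rw [List.cons_append] at hax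
    rw [List.cons_append, List.tails_cons, List.tails_cons, List.countP_cons, List.countP_cons, hax,
      ih fun t ht => h t (ht.trans (List.suffix_cons a x))]
    omega

def firstNonFlat (w : List Step) : Option Step := w.find? (· != F)

lemma firstNonFlat_append_ne {x y : List Step} {s : Step} (hx : firstNonFlat x ≠ some s)
    (hy : firstNonFlat y ≠ some s) : firstNonFlat (x ++ y) ≠ some s := by
  rw [firstNonFlat, List.find?_append, Ne, Option.or_eq_some_iff]
  tauto

lemma eq_replicate_of_firstNonFlat_eq_none {w : List Step} (h : firstNonFlat w = none) :
    w = List.replicate w.length F :=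
  List.eq_replicate_length.mpr fun s hs => by simpa using List.find?_eq_none.mp h s hs

lemma eq_replicate_append_of_firstNonFlat_eq_some {w : List Step} {s : Step}
    (h : firstNonFlat w = some s) : s ≠ F ∧ ∃ k z, w = List.replicate k F ++ s :: z := by
  obtain ⟨hs, as, z, rfl, has⟩ := List.find?_eq_some_iff_append.mp h
  refine ⟨by simpa using hs, as.length, z, ?_⟩
  rw [← List.eq_replicate_length.mpr fun a ha => by simpa using has a ha]

/-- `x` does not end with a factor `U F^k`, so no pattern starting with such a factor can
straddle the junction of `x ++ y`. -/
def NoDanglingUp (x : List Step) : Prop := firstNonFlat x.reverse ≠ some U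

lemma noDanglingUp_append {x y : List Step} (hx : NoDanglingUp x) (hy : NoDanglingUp y) :
    NoDanglingUp (x ++ y) := by
  rw [NoDanglingUp, List.reverse_append]
  exact firstNonFlat_append_ne hy hx

lemma noDanglingUp_append_D (x : List Step) : NoDanglingUp (x ++ [D]) := by
  simp [NoDanglingUp, firstNonFlat]

lemma noDanglingUp_append_F {x : List Step} (hx : NoDanglingUp x) : NoDanglingUp (x ++ [F]) :=
  noDanglingUp_append hx (by simp [NoDanglingUp, firstNonFlat])

lemma NoDanglingUp.of_suffix {x t : List Step} (hx : NoDanglingUp x) (ht : t <:+ x) :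
    NoDanglingUp t := by
  obtain ⟨s, rfl⟩ := ht
  rw [NoDanglingUp, List.reverse_append, firstNonFlat, List.find?_append] at hx
  intro h
  exact hx (by rw [← firstNonFlat, h]; rfl)

lemma NoDanglingUp.exists_of_cons_U {z : List Step} (h : NoDanglingUp (U :: z)) :
    ∃ k s w, s ≠ F ∧ z = List.replicate k F ++ s :: w := by
  cases hz : firstNonFlat z with
  | none =>
    rw [eq_replicate_of_firstNonFlat_eq_none hz] at h
    simp [NoDanglingUp, firstNonFlat] at h
  | some s =>
    obtain ⟨hs, k, w, rfl⟩ := eq_replicate_append_of_firstNonFlat_eq_some hz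
    exact ⟨k, s, w, hs, rfl⟩

lemma isPrefixOf_append_of_noDanglingUp {p : List Step} (hp : ∀ s ∈ p, s = U) {t : List Step}
    (ht : NoDanglingUp t) (ht₀ : t ≠ []) (y : List Step) :
    p.isPrefixOf (t ++ y) = p.isPrefixOf t := by
  induction p generalizing t with
  | nil => simp [List.isPrefixOf]
  | cons u p ih =>
    obtain ⟨s, z, rfl⟩ := List.exists_cons_of_ne_nil ht₀
    obtain rfl : u = U := hp u List.mem_cons_self
    cases s with
    | U =>
      obtain ⟨k, s, w, -, rfl⟩ := ht.exists_of_cons_U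
      simp only [List.cons_append, List.isPrefixOf, beq_self_eq_true, Bool.true_and]
      exact ih (fun s hs => hp s (List.mem_cons_of_mem U hs)) (ht.of_suffix (List.suffix_cons U _))
        (by simp)
    | D | F => rfl

lemma fThenD_replicate_append (k : ℕ) {s : Step} (hs : s ≠ F) (w : List Step) :
    fThenD (List.replicate k F ++ s :: w) = (k != 0 && s == D) := by
  induction k with
  | zero => cases s <;> simp_all [fThenD]
  | succ k ih =>
    cases k with
    | zero => cases s <;> simp_all [fThenD]
    | succ k => simpa [List.replicate_succ, fThenD] using ih

lemma fThenU_replicate_append (k : ℕ) {s : Step} (hs : s ≠ F) (w : List Step) :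
    fThenU (List.replicate k F ++ s :: w) = (k != 0 && s == U) := by
  induction k with
  | zero => cases s <;> simp_all [fThenU]
  | succ k ih =>
    cases k with
    | zero => cases s <;> simp_all [fThenU]
    | succ k => simpa [List.replicate_succ, fThenU] using ih

lemma countP_tails_append_of_noDanglingUp (q : List Step → Bool) (hq : q [] = false)
    (hstab : ∀ t y, NoDanglingUp t → t ≠ [] → q (t ++ y) = q t) {x : List Step}
    (hx : NoDanglingUp x) (y : List Step) :
    (x ++ y).tails.countP q = x.tails.countP q + y.tails.countP q :=
  List.countP_tails_append q hq x y fun t ht ht₀ => hstab t y (hx.of_suffix ht) ht₀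

lemma countFactor_append {p : List Step} (hp : ∀ s ∈ p, s = U) (hp₀ : p ≠ []) {x : List Step}
    (hx : NoDanglingUp x) (y : List Step) :
    countFactor p (x ++ y) = countFactor p x + countFactor p y := by
  obtain ⟨u, p', rfl⟩ := List.exists_cons_of_ne_nil hp₀
  exact countP_tails_append_of_noDanglingUp _ rfl
    (fun t y ht ht₀ => isPrefixOf_append_of_noDanglingUp hp ht ht₀ y) hx y

lemma countFactor_append_D {p : List Step} (hp : ∀ s ∈ p, s = U) (hp₀ : p ≠ []) {x : List Step}
    (hx : NoDanglingUp x) : countFactor p (x ++ [D]) = countFactor p x := by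
  obtain ⟨u, p', rfl⟩ := List.exists_cons_of_ne_nil hp₀
  obtain rfl : u = U := hp u List.mem_cons_self
  rw [countFactor_append hp (List.cons_ne_nil U p') hx, add_eq_left]
  simp [countFactor]

lemma countUFD_append {x : List Step} (hx : NoDanglingUp x) (y : List Step) :
    countUFD (x ++ y) = countUFD x + countUFD y := by
  refine countP_tails_append_of_noDanglingUp _ rfl (fun t y ht ht₀ => ?_) hx y
  obtain ⟨s, z, rfl⟩ := List.exists_cons_of_ne_nil ht₀
  cases s with
  | U =>
    obtain ⟨k, s, w, hs, rfl⟩ := ht.exists_of_cons_U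
    simp [fThenD_replicate_append k hs]
  | D | F => rfl

lemma countUFU_append {x : List Step} (hx : NoDanglingUp x) (y : List Step) :
    countUFU (x ++ y) = countUFU x + countUFU y := by
  refine countP_tails_append_of_noDanglingUp _ rfl (fun t y ht ht₀ => ?_) hx y
  obtain ⟨s, z, rfl⟩ := List.exists_cons_of_ne_nil ht₀
  cases s with
  | U =>
    obtain ⟨k, s, w, hs, rfl⟩ := ht.exists_of_cons_U
    simp [fThenU_replicate_append k hs]
  | D | F => rfl

lemma countFactor_cons (p : List Step) (s : Step) (w : List Step) :
    countFactor p (s :: w) = countFactor p w + if p.isPrefixOf (s :: w) then 1 else 0 := by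
  rw [countFactor, List.tails_cons, List.countP_cons, ← countFactor]

lemma countUFD_cons_U (w : List Step) :
    countUFD (U :: w) = countUFD w + if fThenD w then 1 else 0 := by
  rw [countUFD, List.tails_cons, List.countP_cons, ← countUFD]

lemma countUFU_cons_U (w : List Step) :
    countUFU (U :: w) = countUFU w + if fThenU w then 1 else 0 := by
  rw [countUFU, List.tails_cons, List.countP_cons, ← countUFU]

def uuuStat (m : List Step) : ℕ := countUFD m + 2 * (countUFU m + countFactor [U, U] m)

lemma uuuStat_append {x : List Step} (hx : NoDanglingUp x) (y : List Step) :
    uuuStat (x ++ y) = uuuStat x + uuuStat y := by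
  simp only [uuuStat, countUFD_append hx, countUFU_append hx,
    countFactor_append (p := [U, U]) (by simp) (by simp) hx]
  ring

lemma uuuStat_cons_U (w : List Step) :
    uuuStat (U :: w) = uuuStat w + ((if fThenD w then 1 else 0) +
      2 * ((if fThenU w then 1 else 0) + if [U, U].isPrefixOf (U :: w) then 1 else 0)) := by
  simp only [uuuStat, countUFD_cons_U, countUFU_cons_U, countFactor_cons]
  ring

lemma countFactor_UU_UD (v : List Step) :
    countFactor [U, U] (U :: D :: v) = countFactor [U, U] v := by
  simp [countFactor_cons]

lemma two_le_height_UU (v : List Step) : 2 ≤ height (U :: U :: v) :=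
  List.le_max_of_le' 0 (List.mem_map_of_mem ((List.mem_inits _ _).mpr ⟨v, rfl⟩ : [U, U] ∈ _))
    le_rfl

lemma DH.noDanglingUp {w : List Step} (h : DH w) : NoDanglingUp w := by
  induction h with
  | nil => simp [NoDanglingUp, firstNonFlat]
  | cons α β _ _ _ _ ihβ =>
    rw [show U :: (α ++ [D] ++ β) = (U :: α ++ [D]) ++ β by simp]
    exact noDanglingUp_append (noDanglingUp_append_D _) ihβ

lemma DH.eq_nil_or_cons_U {w : List Step} (h : DH w) : w = [] ∨ ∃ v, w = U :: v := by
  cases h with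
  | nil => exact Or.inl rfl
  | cons α β _ _ _ => exact Or.inr ⟨_, rfl⟩

lemma DH.countFactor_UU_eq_zero {w : List Step} (h : DH w) (hw : height w ≤ 1) :
    countFactor [U, U] w = 0 := by
  induction h with
  | nil => rfl
  | cons α β hα _ hle _ ihβ =>
    obtain rfl | ⟨v, rfl⟩ := hα.eq_nil_or_cons_U
    · have : height [U, D] = 1 := by decide
      simp only [List.nil_append, List.cons_append] at hle ⊢
      rw [countFactor_UU_UD, ihβ (by omega)]
    · have := two_le_height_UU (v ++ [D] ++ β)
      simp only [List.cons_append] at hw this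
      omega

lemma DH.eq_nil_or_UD_or_UU {w : List Step} (h : DH w) :
    w = [] ∨ (∃ v, w = U :: D :: v ∧ countFactor [U, U] w = 0) ∨ ∃ v, w = U :: U :: v := by
  cases h with
  | nil => exact Or.inl rfl
  | cons α β hα hβ hle =>
    obtain rfl | ⟨v, rfl⟩ := hα.eq_nil_or_cons_U
    · have : height [U, D] = 1 := by decide
      simp only [List.nil_append, List.cons_append] at hle ⊢
      refine Or.inr (Or.inl ⟨β, rfl, ?_⟩)
      rw [countFactor_UU_UD, hβ.countFactor_UU_eq_zero (by omega)]
    · exact Or.inr (Or.inr ⟨v ++ [D] ++ β, by simp⟩)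

lemma Phi.noDanglingUp {w m : List Step} (h : Phi w m) : NoDanglingUp m := by
  induction h with
  | nil => simp [NoDanglingUp, firstNonFlat]
  | flat _ _ _ _ ih => exact noDanglingUp_append_F ih
  | up _ _ _ a b c =>
    rw [show a ++ c ++ U :: (b ++ [D]) = (a ++ c ++ U :: b) ++ [D] by simp]
    exact noDanglingUp_append_D _

lemma Phi.firstNonFlat_ne_D {w m : List Step} (h : Phi w m) : firstNonFlat m ≠ some D := by
  induction h with
  | nil => simp [firstNonFlat]
  | flat _ _ _ _ ih => exact firstNonFlat_append_ne ih (by simp [firstNonFlat])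
  | up _ _ _ _ _ _ _ _ _ _ _ _ iha _ ihc =>
    exact firstNonFlat_append_ne (firstNonFlat_append_ne iha ihc) (by simp [firstNonFlat])

lemma Phi.length_eq {w m : List Step} (h : Phi w m) : w.length = 2 * m.length := by
  induction h with
  | nil => rfl
  | flat _ _ _ _ ih => simp [ih]; ring
  | up _ _ _ _ _ _ _ _ _ _ _ _ iha ihb ihc => simp [iha, ihb, ihc]; ring

lemma Phi.countFactor_UU_pos_iff {w m : List Step} (h : Phi w m) :
    0 < countFactor [U, U] w ↔ U ∈ m := by
  induction h with
  | nil => simp [countFactor]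
  | flat α a hα _ ih =>
    rw [countFactor_append (by simp) (by simp) hα.noDanglingUp, List.mem_append]
    simp [← ih, countFactor]
  | up α β γ a b c hα =>
    rw [List.append_assoc, List.append_assoc, List.append_assoc, List.append_assoc,
      countFactor_append (by simp) (by simp) hα.noDanglingUp]
    simp [countFactor_cons]

lemma eq_replicate_or_eq_replicate_append_U {b : List Step} (h : firstNonFlat b ≠ some D) :
    b = List.replicate b.length F ∨ ∃ k z, b = List.replicate k F ++ U :: z := by
  cases hb : firstNonFlat b with
  | none => exact Or.inl (eq_replicate_of_firstNonFlat_eq_none hb)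
  | some s =>
    obtain ⟨hs, k, z, rfl⟩ := eq_replicate_append_of_firstNonFlat_eq_some hb
    cases s with
    | U => exact Or.inr ⟨k, z, rfl⟩
    | D => exact absurd hb h
    | F => exact absurd rfl hs

lemma Phi.eq_nil_or_UD_or_UU {β b : List Step} (hβ : DH β) (h : Phi β b) :
    (β = [] ∧ b = []) ∨ (∃ v k, β = U :: D :: v ∧ b = List.replicate (k + 1) F) ∨
      ∃ v k z, β = U :: U :: v ∧ b = List.replicate k F ++ U :: z := by
  have hlen := h.length_eq
  rcases hβ.eq_nil_or_UD_or_UU with rfl | ⟨v, rfl, hUU⟩ | ⟨v, rfl⟩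
  · exact Or.inl ⟨rfl, List.eq_nil_of_length_eq_zero (by simpa using hlen)⟩
  · have hU : U ∉ b := by rw [← h.countFactor_UU_pos_iff, hUU]; simp
    rcases eq_replicate_or_eq_replicate_append_U h.firstNonFlat_ne_D with hb | ⟨k, z, rfl⟩
    · obtain ⟨k, hk⟩ : ∃ k, b.length = k + 1 := ⟨b.length - 1, by simp at hlen; omega⟩
      exact Or.inr (Or.inl ⟨v, k, rfl, hk ▸ hb⟩)
    · simp at hU
  · have hU : U ∈ b := h.countFactor_UU_pos_iff.mp (by simp [countFactor_cons])
    rcases eq_replicate_or_eq_replicate_append_U h.firstNonFlat_ne_D with hb | ⟨k, z, hb⟩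
    · rw [hb] at hU; simp at hU
    · exact Or.inr (Or.inr ⟨v, k, z, rfl, hb⟩)

lemma Phi.uuu_balance_up {β b : List Step} (hβ : DH β) (h : Phi β b) :
    countFactor [U, U, U] (U :: U :: (β ++ [D])) + uuuStat b =
      countFactor [U, U, U] β + uuuStat (U :: (b ++ [D])) := by
  rw [countFactor_cons, countFactor_cons,
    countFactor_append_D (by simp) (by simp) hβ.noDanglingUp, uuuStat_cons_U,
    uuuStat_append h.noDanglingUp, show uuuStat [D] = 0 from rfl, add_zero]
  rcases h.eq_nil_or_UD_or_UU hβ with ⟨rfl, rfl⟩ | ⟨v, k, rfl, rfl⟩ | ⟨v, k, z, rfl, rfl⟩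
  · decide
  · rw [fThenD_replicate_append (k + 1) (s := D) (by decide),
      fThenU_replicate_append (k + 1) (s := D) (by decide)]
    simp [List.replicate_succ]
    omega
  · simp only [List.append_assoc, List.cons_append,
      fThenD_replicate_append k (s := U) (by decide),
      fThenU_replicate_append k (s := U) (by decide)]
    cases k <;> simp [List.replicate_succ] <;> omega

theorem Phi.countFactor_UUU_eq_uuuStat {w m : List Step} (h : Phi w m) :
    countFactor [U, U, U] w = uuuStat m := by
  induction h with
  | nil => rfl
  | flat α a hα ha ih =>
    rw [countFactor_append (by simp) (by simp) hα.noDanglingUp, uuuStat_append ha.noDanglingUp, ih]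
    rfl
  | up α β γ a b c hα hβ hγ ha hb hc ihα ihβ ihγ =>
    have hUUβD : NoDanglingUp (U :: U :: (β ++ [D])) := by
      simpa using noDanglingUp_append_D (U :: U :: β)
    rw [show α ++ [U, U] ++ β ++ [D] ++ γ ++ [D] = α ++ (U :: U :: (β ++ [D]) ++ (γ ++ [D])) by
        simp,
      countFactor_append (by simp) (by simp) hα.noDanglingUp,
      countFactor_append (by simp) (by simp) hUUβD,
      countFactor_append_D (by simp) (by simp) hγ.noDanglingUp,
      uuuStat_append (noDanglingUp_append ha.noDanglingUp hc.noDanglingUp),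
      uuuStat_append ha.noDanglingUp]
    have := hb.uuu_balance_up hβ
    omega

theorem stmt14_general (P m : List Step) (hphi : Phi P m) :
    countFactor [Step.U, Step.U, Step.U] P =
      countUFD m + 2 * (countUFU m + countFactor [Step.U, Step.U] m) :=
  hphi.countFactor_UUU_eq_uuuStat

/-- φ transports UUU: #UUU(P) = #UF⁺D(φP) + 2(#UF⁺U(φP) + #UU(φP)). -/
theorem stmt14 (n : ℕ) (P m : List Step) (hP : DH P) (hlen : P.length = 2 * n)
    (hphi : Phi P m) :
    countFactor [Step.U, Step.U, Step.U] P =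
      countUFD m + 2 * (countUFU m + countFactor [Step.U, Step.U] m) :=
  stmt14_general P m hphi
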